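/- (Three particles, stationary points of the rescaled system.) Let 4/3 < χ < 2, α = 2(χ/χ₃ − 1) = (3χ−4)/2, and consider stationary points (v₁,v₂) with v₁, v₂ > 0 of the rescaled three-particle system lying on the curve v₁² + v₂² + v₁v₂ = 3/2. If 4/3 < χ ≤ 16/9, the unique such point is (√2/2, √2/2). If 16/9 < χ < 2, there are exactly three such points: (√2/2, √2/2), (v̄₁(χ), v̄₂(χ)) and (v̄₂(χ), v̄₁(χ)), where v̄₁(χ) = (1/2)[√((3/2)(1 + 2(1−χ/2)/α)) − √((3/2)(1 − 6(1−χ/2)/α))] and v̄₂(χ) = (1/2)[√((3/2)(1 + 2(1−χ/2)/α)) + √((3/2)(1 − 6(1−χ/2)/α))]. Moreover (v̄₁(χ), v̄₂(χ)) → (0, √(3/2)) as χ → 2⁻. -/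
import Mathlib


open Filter

noncomputable section

/-- A stationary point of the rescaled three-particle system
`v₁' = 2/v₁ - 1/v₂ - (χ/2)(2/v₁ - 1/v₂ + 1/(v₁+v₂)) + αv₁` (and symmetrically for `v₂`). -/
def IsStat3 (χ α v₁ v₂ : ℝ) : Prop :=
  2 / v₁ - 1 / v₂ - (χ / 2) * (2 / v₁ - 1 / v₂ + 1 / (v₁ + v₂)) + α * v₁ = 0 ∧
    2 / v₂ - 1 / v₁ - (χ / 2) * (2 / v₂ - 1 / v₁ + 1 / (v₁ + v₂)) + α * v₂ = 0

/-- `v̄₁(χ)`, the smaller coordinate of the asymmetric stationary point, with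
`α = (3χ-4)/2`. -/
def vbar1 (χ : ℝ) : ℝ :=
  (1 / 2) * (Real.sqrt ((3 / 2) * (1 + 2 * (1 - χ / 2) / ((3 * χ - 4) / 2)))
    - Real.sqrt ((3 / 2) * (1 - 6 * (1 - χ / 2) / ((3 * χ - 4) / 2))))

/-- `v̄₂(χ)`, the larger coordinate of the asymmetric stationary point. -/
def vbar2 (χ : ℝ) : ℝ :=
  (1 / 2) * (Real.sqrt ((3 / 2) * (1 + 2 * (1 - χ / 2) / ((3 * χ - 4) / 2)))
    + Real.sqrt ((3 / 2) * (1 - 6 * (1 - χ / 2) / ((3 * χ - 4) / 2))))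

/-- square root injectivity helper -/
lemma sq_inj' {a b : ℝ} (ha : 0 ≤ a) (hb : 0 ≤ b) (h : a ^ 2 = b ^ 2) : a = b := by
  rw [← Real.sqrt_sq ha, h, Real.sqrt_sq hb]

/-- one equation of stationarity, asymmetric branch -/
lemma stat_eq1 (χ v₁ v₂ : ℝ) (h1 : 0 < v₁) (h2 : 0 < v₂)
    (hpq : (3 * χ - 4) / 2 * (v₁ * v₂) = 3 * (1 - χ / 2))
    (hc : v₁ ^ 2 + v₂ ^ 2 + v₁ * v₂ = 3 / 2) :
    2 / v₁ - 1 / v₂ - (χ / 2) * (2 / v₁ - 1 / v₂ + 1 / (v₁ + v₂)) + ((3 * χ - 4) / 2) * v₁ = 0 := by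
  have h1' := h1.ne'
  have h2' := h2.ne'
  have h3' : v₁ + v₂ ≠ 0 := by positivity
  have key : 2 * v₂ * (v₁ + v₂) - v₁ * (v₁ + v₂)
      - (χ / 2) * (2 * v₂ * (v₁ + v₂) - v₁ * (v₁ + v₂) + v₁ * v₂)
      + ((3 * χ - 4) / 2) * v₁ * (v₁ * v₂ * (v₁ + v₂)) = 0 := by
    linear_combination (v₁ * (v₁ + v₂) - 1) * hpq + 2 * (1 - χ / 2) * hc
  have expand : 2 / v₁ - 1 / v₂ - (χ / 2) * (2 / v₁ - 1 / v₂ + 1 / (v₁ + v₂)) + ((3 * χ - 4) / 2) * v₁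
      = (2 * v₂ * (v₁ + v₂) - v₁ * (v₁ + v₂)
      - (χ / 2) * (2 * v₂ * (v₁ + v₂) - v₁ * (v₁ + v₂) + v₁ * v₂)
      + ((3 * χ - 4) / 2) * v₁ * (v₁ * v₂ * (v₁ + v₂))) / (v₁ * v₂ * (v₁ + v₂)) := by
    field_simp
  rw [expand, key, zero_div]

/-- full stationarity, asymmetric branch -/
lemma stat_of_prod (χ v₁ v₂ : ℝ) (h1 : 0 < v₁) (h2 : 0 < v₂)
    (hpq : (3 * χ - 4) / 2 * (v₁ * v₂) = 3 * (1 - χ / 2))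
    (hc : v₁ ^ 2 + v₂ ^ 2 + v₁ * v₂ = 3 / 2) :
    IsStat3 χ ((3 * χ - 4) / 2) v₁ v₂ := by
  constructor
  · exact stat_eq1 χ v₁ v₂ h1 h2 hpq hc
  · have h := stat_eq1 χ v₂ v₁ h2 h1 (by linear_combination hpq) (by linear_combination hc)
    rw [add_comm v₂ v₁] at h
    exact h

/-- stationarity of the symmetric point -/
lemma stat_sym (χ v : ℝ) (hv : 0 < v) (hv2 : v ^ 2 = 1 / 2) :
    IsStat3 χ ((3 * χ - 4) / 2) v v := by
  have hv' := hv.ne'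
  have h3' : v + v ≠ 0 := by positivity
  have : 2 / v - 1 / v - (χ / 2) * (2 / v - 1 / v + 1 / (v + v)) + ((3 * χ - 4) / 2) * v = 0 := by
    have key : 2 * v * (v + v) - v * (v + v)
        - (χ / 2) * (2 * v * (v + v) - v * (v + v) + v * v)
        + ((3 * χ - 4) / 2) * v * (v * v * (v + v)) = 0 := by
      linear_combination ((3 * χ - 4) * v ^ 2) * hv2
    have expand : 2 / v - 1 / v - (χ / 2) * (2 / v - 1 / v + 1 / (v + v)) + ((3 * χ - 4) / 2) * v
        = (2 * v * (v + v) - v * (v + v)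
        - (χ / 2) * (2 * v * (v + v) - v * (v + v) + v * v)
        + ((3 * χ - 4) / 2) * v * (v * v * (v + v))) / (v * v * (v + v)) := by
      field_simp
    rw [expand, key, zero_div]
  exact ⟨this, this⟩

/-- necessary condition from stationarity -/
lemma stat_necc (χ v₁ v₂ : ℝ) (h1 : 0 < v₁) (h2 : 0 < v₂)
    (h : IsStat3 χ ((3 * χ - 4) / 2) v₁ v₂) :
    v₁ = v₂ ∨ (3 * χ - 4) / 2 * (v₁ * v₂) = 3 * (1 - χ / 2) := by
  have h1' := h1.ne'
  have h2' := h2.ne'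
  have h3 : (0:ℝ) < v₁ + v₂ := by positivity
  have h3' := h3.ne'
  have e1 : 2 * v₂ * (v₁ + v₂) - v₁ * (v₁ + v₂)
      - (χ / 2) * (2 * v₂ * (v₁ + v₂) - v₁ * (v₁ + v₂) + v₁ * v₂)
      + ((3 * χ - 4) / 2) * v₁ * (v₁ * v₂ * (v₁ + v₂))
      = (2 / v₁ - 1 / v₂ - (χ / 2) * (2 / v₁ - 1 / v₂ + 1 / (v₁ + v₂)) + ((3 * χ - 4) / 2) * v₁)
        * (v₁ * v₂ * (v₁ + v₂)) := by
    field_simp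
  have e2 : 2 * v₁ * (v₁ + v₂) - v₂ * (v₁ + v₂)
      - (χ / 2) * (2 * v₁ * (v₁ + v₂) - v₂ * (v₁ + v₂) + v₁ * v₂)
      + ((3 * χ - 4) / 2) * v₂ * (v₁ * v₂ * (v₁ + v₂))
      = (2 / v₂ - 1 / v₁ - (χ / 2) * (2 / v₂ - 1 / v₁ + 1 / (v₁ + v₂)) + ((3 * χ - 4) / 2) * v₂)
        * (v₁ * v₂ * (v₁ + v₂)) := by
    field_simp
  have hP1 : 2 * v₂ * (v₁ + v₂) - v₁ * (v₁ + v₂)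
      - (χ / 2) * (2 * v₂ * (v₁ + v₂) - v₁ * (v₁ + v₂) + v₁ * v₂)
      + ((3 * χ - 4) / 2) * v₁ * (v₁ * v₂ * (v₁ + v₂)) = 0 := by rw [e1, h.1, zero_mul]
  have hP2 : 2 * v₁ * (v₁ + v₂) - v₂ * (v₁ + v₂)
      - (χ / 2) * (2 * v₁ * (v₁ + v₂) - v₂ * (v₁ + v₂) + v₁ * v₂)
      + ((3 * χ - 4) / 2) * v₂ * (v₁ * v₂ * (v₁ + v₂)) = 0 := by rw [e2, h.2, zero_mul]
  have key : (v₁ - v₂) * ((3 * χ - 4) / 2 * (v₁ * v₂) - 3 * (1 - χ / 2)) * (v₁ + v₂) = 0 := by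
    linear_combination hP1 - hP2
  rcases mul_eq_zero.1 key with hk | hk
  · rcases mul_eq_zero.1 hk with hk' | hk'
    · exact Or.inl (by linarith [sub_eq_zero.1 hk'])
    · exact Or.inr (by linarith [sub_eq_zero.1 hk'])
  · exact absurd hk h3'

/-- Three particles, stationary points of the rescaled system on the curve
`v₁² + v₂² + v₁v₂ = 3/2`: for `4/3 < χ ≤ 16/9` the unique positive stationary point is
`(√2/2, √2/2)`; for `16/9 < χ < 2` there are exactly three, namely `(√2/2, √2/2)`,
`(v̄₁(χ), v̄₂(χ))` and `(v̄₂(χ), v̄₁(χ))`; moreover `(v̄₁(χ), v̄₂(χ)) → (0, √(3/2))` as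
`χ → 2⁻`. -/
theorem stmt18 :
    (∀ χ : ℝ, 4 / 3 < χ → χ ≤ 16 / 9 → ∀ v₁ v₂ : ℝ, 0 < v₁ → 0 < v₂ →
      v₁ ^ 2 + v₂ ^ 2 + v₁ * v₂ = 3 / 2 →
      (IsStat3 χ ((3 * χ - 4) / 2) v₁ v₂ ↔
        v₁ = Real.sqrt 2 / 2 ∧ v₂ = Real.sqrt 2 / 2)) ∧
    (∀ χ : ℝ, 16 / 9 < χ → χ < 2 → ∀ v₁ v₂ : ℝ, 0 < v₁ → 0 < v₂ →
      v₁ ^ 2 + v₂ ^ 2 + v₁ * v₂ = 3 / 2 →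
      (IsStat3 χ ((3 * χ - 4) / 2) v₁ v₂ ↔
        ((v₁, v₂) = (Real.sqrt 2 / 2, Real.sqrt 2 / 2) ∨
          (v₁, v₂) = (vbar1 χ, vbar2 χ) ∨ (v₁, v₂) = (vbar2 χ, vbar1 χ)))) ∧
    Filter.Tendsto vbar1 (nhdsWithin 2 (Set.Iio 2)) (nhds 0) ∧
    Filter.Tendsto vbar2 (nhdsWithin 2 (Set.Iio 2)) (nhds (Real.sqrt (3 / 2))) := by
  have sqrt2sq : (Real.sqrt 2 / 2) ^ 2 = 1 / 2 := by
    rw [div_pow, Real.sq_sqrt (by norm_num : (0:ℝ) ≤ 2)]; norm_num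
  have sym_of_eq : ∀ v₁ v₂ : ℝ, 0 < v₁ → v₁ = v₂ → v₁ ^ 2 + v₂ ^ 2 + v₁ * v₂ = 3 / 2 →
      v₁ = Real.sqrt 2 / 2 ∧ v₂ = Real.sqrt 2 / 2 := by
    intro v₁ v₂ h1 he hc
    subst he
    have hsq : v₁ ^ 2 = 1 / 2 := by nlinarith
    have : v₁ = Real.sqrt 2 / 2 :=
      sq_inj' h1.le (by positivity) (by rw [hsq, sqrt2sq])
    exact ⟨this, this⟩
  refine ⟨?_, ?_, ?_, ?_⟩
  · -- case 4/3 < χ ≤ 16/9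
    intro χ hχ1 hχ2 v₁ v₂ h1 h2 hc
    constructor
    · intro h
      rcases stat_necc χ v₁ v₂ h1 h2 h with he | hpq
      · exact sym_of_eq v₁ v₂ h1 he hc
      · by_cases he : v₁ = v₂
        · exact sym_of_eq v₁ v₂ h1 he hc
        · exfalso
          have hne : v₁ - v₂ ≠ 0 := sub_ne_zero.2 he
          have hD : 0 < (v₁ - v₂) ^ 2 := by positivity
          nlinarith [hpq, hc, hD]
    · rintro ⟨e1, e2⟩
      subst e1; subst e2
      exact stat_sym χ _ h1 sqrt2sq
  · -- case 16/9 < χ < 2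
    intro χ hχ1 hχ2 v₁ v₂ h1 h2 hc
    have hα : (0:ℝ) < 3 * χ - 4 := by linarith
    have hα' : (3 * χ - 4) ≠ 0 := hα.ne'
    have hk : (0:ℝ) < 1 - χ / 2 := by linarith
    have hApos : (0:ℝ) ≤ (3 / 2) * (1 + 2 * (1 - χ / 2) / ((3 * χ - 4) / 2)) := by
      have : (0:ℝ) ≤ 2 * (1 - χ / 2) / ((3 * χ - 4) / 2) :=
        div_nonneg (by linarith) (by linarith)
      linarith
    have hBpos : (0:ℝ) ≤ (3 / 2) * (1 - 6 * (1 - χ / 2) / ((3 * χ - 4) / 2)) := by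
      have h6 : 6 * (1 - χ / 2) / ((3 * χ - 4) / 2) ≤ 1 := by
        rw [div_le_one (by linarith)]; linarith
      linarith
    constructor
    · intro h
      rcases stat_necc χ v₁ v₂ h1 h2 h with he | hpq
      · left
        have := sym_of_eq v₁ v₂ h1 he hc
        simp [Prod.ext_iff, this.1, this.2]
      · -- asymmetric branch
        have h3 : (0:ℝ) < v₁ + v₂ := by positivity
        have hargA : (3 / 2) * (1 + 2 * (1 - χ / 2) / ((3 * χ - 4) / 2)) = (v₁ + v₂) ^ 2 := by
          field_simp
          linear_combination (-4) * hpq + (8 - 6 * χ) * hc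
        have hargB : (3 / 2) * (1 - 6 * (1 - χ / 2) / ((3 * χ - 4) / 2)) = (v₁ - v₂) ^ 2 := by
          field_simp
          linear_combination 12 * hpq + (8 - 6 * χ) * hc
        have hA : Real.sqrt ((3 / 2) * (1 + 2 * (1 - χ / 2) / ((3 * χ - 4) / 2))) = v₁ + v₂ := by
          rw [hargA, Real.sqrt_sq h3.le]
        have hB : Real.sqrt ((3 / 2) * (1 - 6 * (1 - χ / 2) / ((3 * χ - 4) / 2))) = |v₁ - v₂| := by
          rw [hargB, Real.sqrt_sq_eq_abs]
        rcases le_total v₂ v₁ with hle | hle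
        · right; right
          have habs : |v₁ - v₂| = v₁ - v₂ := abs_of_nonneg (by linarith)
          rw [Prod.ext_iff]
          constructor
          · show v₁ = vbar2 χ
            rw [vbar2, hA, hB, habs]; ring
          · show v₂ = vbar1 χ
            rw [vbar1, hA, hB, habs]; ring
        · right; left
          have habs : |v₁ - v₂| = -(v₁ - v₂) := abs_of_nonpos (by linarith)
          rw [Prod.ext_iff]
          constructor
          · show v₁ = vbar1 χ
            rw [vbar1, hA, hB, habs]; ring
          · show v₂ = vbar2 χ
            rw [vbar2, hA, hB, habs]; ring
    · rintro (he | he | he) <;> rw [Prod.ext_iff] at he <;>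
        obtain ⟨e1, e2⟩ := he
      · simp only at e1 e2
        subst e1; subst e2
        exact stat_sym χ _ h1 sqrt2sq
      · simp only at e1 e2
        have hprod : vbar1 χ * vbar2 χ = 3 * (1 - χ / 2) / ((3 * χ - 4) / 2) := by
          rw [vbar1, vbar2]
          have e : ∀ x y : ℝ, (1/2) * (x - y) * ((1/2) * (x + y)) = (x^2 - y^2)/4 := by
            intro x y; ring
          rw [e, Real.sq_sqrt hApos, Real.sq_sqrt hBpos]
          field_simp
          ring
        have hpq : (3 * χ - 4) / 2 * (v₁ * v₂) = 3 * (1 - χ / 2) := by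
          rw [e1, e2, hprod]
          field_simp
        exact stat_of_prod χ v₁ v₂ h1 h2 hpq hc
      · simp only at e1 e2
        have hprod : vbar1 χ * vbar2 χ = 3 * (1 - χ / 2) / ((3 * χ - 4) / 2) := by
          rw [vbar1, vbar2]
          have e : ∀ x y : ℝ, (1/2) * (x - y) * ((1/2) * (x + y)) = (x^2 - y^2)/4 := by
            intro x y; ring
          rw [e, Real.sq_sqrt hApos, Real.sq_sqrt hBpos]
          field_simp
          ring
        have hpq : (3 * χ - 4) / 2 * (v₁ * v₂) = 3 * (1 - χ / 2) := by
          rw [e1, e2, mul_comm (vbar2 χ), hprod]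
          field_simp
        exact stat_of_prod χ v₁ v₂ h1 h2 hpq hc
  · -- limit of vbar1
    have hcont : ContinuousAt vbar1 2 := by
      unfold vbar1
      fun_prop (disch := norm_num)
    have hval : vbar1 2 = 0 := by
      unfold vbar1; norm_num
    have := hcont.tendsto
    rw [hval] at this
    exact this.mono_left nhdsWithin_le_nhds
  · -- limit of vbar2
    have hcont : ContinuousAt vbar2 2 := by
      unfold vbar2
      fun_prop (disch := norm_num)
    have hval : vbar2 2 = Real.sqrt (3 / 2) := by
      unfold vbar2; norm_num; ring
    have := hcont.tendsto
    rw [hval] at this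
    exact this.mono_left nhdsWithin_le_nhds
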